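/- arXiv:2305.12274 — 3 statements merged into one kernel-verified Lean document; each statement's English description precedes it below -/
import Mathlib

section
/- The vector y* defined by yᵢ* = max(δᵢ - λ*, 0) satisfies the constraint Σ_{i=1}^n yᵢ* = y, where λ* = (Σ_{i=1}^{k*} δᵢ - y)/k* and k* is the largest k with Σ_{i=1}^k (δᵢ - δ_k) < y. -/
open Finset

/-!
Since `∑_{i ≤ k} (δᵢ - c) = ∑_{i ≤ k} δᵢ - k c`, the defining inequality of `k*` says exactly
`λ* < δ_{k*}`, and its failure at `k* + 1` says `δ_{k*+1} ≤ λ*`. By monotonicity of `δ` the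
positive parts `max (δᵢ - λ*) 0` are therefore `δᵢ - λ*` for `i ≤ k*` and `0` beyond, and
`∑_{i ≤ k*} (δᵢ - λ*) = y` by the choice of `λ*`.
-/

section WaterFilling

variable {ι : Type*} (s : Finset ι) (f : ι → ℝ)

theorem sum_sub_lt_iff_div_card_lt (hs : s.Nonempty) (c y : ℝ) :
    ∑ i ∈ s, (f i - c) < y ↔ (∑ i ∈ s, f i - y) / #s < c := by
  have hcard : (0 : ℝ) < #s := by exact_mod_cast hs.card_pos
  rw [sum_sub_distrib, sum_const, nsmul_eq_mul, div_lt_iff₀ hcard]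
  constructor <;> intro h <;> linarith

theorem sum_sub_div_card_eq (hs : s.Nonempty) (y : ℝ) :
    ∑ i ∈ s, (f i - (∑ j ∈ s, f j - y) / #s) = y := by
  have hcard : (#s : ℝ) ≠ 0 := by exact_mod_cast hs.card_pos.ne'
  rw [sum_sub_distrib, sum_const, nsmul_eq_mul, mul_div_cancel₀ _ hcard]
  ring

theorem sum_max_sub_zero_eq_of_subset {t : Finset ι} {l : ℝ} (hts : t ⊆ s)
    (hin : ∀ i ∈ t, l ≤ f i) (hout : ∀ i ∈ s, i ∉ t → f i ≤ l) :
    ∑ i ∈ s, max (f i - l) 0 = ∑ i ∈ t, (f i - l) := by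
  rw [← sum_subset hts fun i hi hit => max_eq_right (sub_nonpos.mpr (hout i hi hit))]
  exact sum_congr rfl fun i hi => max_eq_left (sub_nonneg.mpr (hin i hi))

end WaterFilling

theorem sum_Icc_sub_succ_eq (δ : ℕ → ℝ) (k : ℕ) :
    ∑ i ∈ Icc 1 (k + 1), (δ i - δ (k + 1)) = ∑ i ∈ Icc 1 k, (δ i - δ (k + 1)) := by
  rw [sum_Icc_succ_top (Nat.le_add_left 1 k), sub_self, add_zero]

theorem stmt2_general (n : ℕ) (y : ℝ) (δ : ℕ → ℝ)
    (hδ : ∀ i j, 1 ≤ i → i ≤ j → j ≤ n → δ j ≤ δ i)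
    (kstar : ℕ)
    (hk : (kstar ∈ Finset.Icc 1 n ∧ ∑ i ∈ Finset.Icc 1 kstar, (δ i - δ kstar) < y) ∧
      ∀ j, (j ∈ Finset.Icc 1 n ∧ ∑ i ∈ Finset.Icc 1 j, (δ i - δ j) < y) → j ≤ kstar)
    (lstar : ℝ) (hl : lstar = ((∑ i ∈ Finset.Icc 1 kstar, δ i) - y) / kstar) :
    ∑ i ∈ Finset.Icc 1 n, max (δ i - lstar) 0 = y := by
  obtain ⟨⟨hkmem, hklt⟩, hkmax⟩ := hk
  obtain ⟨hk1, hkn⟩ := mem_Icc.mp hkmem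
  have hne : (Icc 1 kstar).Nonempty := nonempty_Icc.mpr hk1
  have hl' : lstar = (∑ i ∈ Icc 1 kstar, δ i - y) / #(Icc 1 kstar) := by
    rw [hl, Nat.card_Icc, Nat.add_sub_cancel]
  have hhead : lstar < δ kstar := hl' ▸ (sum_sub_lt_iff_div_card_lt _ δ hne _ y).mp hklt
  have htail : kstar + 1 ≤ n → δ (kstar + 1) ≤ lstar := fun hsucc => by
    have hfail : ¬ ∑ i ∈ Icc 1 (kstar + 1), (δ i - δ (kstar + 1)) < y := fun h =>
      absurd (hkmax (kstar + 1) ⟨mem_Icc.mpr ⟨by omega, hsucc⟩, h⟩) (by omega)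
    rw [sum_Icc_sub_succ_eq, sum_sub_lt_iff_div_card_lt _ δ hne, ← hl'] at hfail
    exact not_lt.mp hfail
  rw [sum_max_sub_zero_eq_of_subset _ δ (Icc_subset_Icc_right hkn), hl',
    sum_sub_div_card_eq _ δ hne]
  · intro i hi
    obtain ⟨hi1, hik⟩ := mem_Icc.mp hi
    exact hhead.le.trans (hδ i kstar hi1 hik hkn)
  · intro i hi hik
    obtain ⟨hi1, hin⟩ := mem_Icc.mp hi
    have hki : kstar + 1 ≤ i := by simp only [mem_Icc, not_and, not_le] at hik; exact hik hi1
    exact (hδ (kstar + 1) i (by omega) hki hin).trans (htail (hki.trans hin))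

/-- The vector `yᵢ* = max(δᵢ - λ*, 0)` satisfies `∑_{i=1}^n yᵢ* = y`,
where `λ* = (∑_{i=1}^{k*} δᵢ - y)/k*` and `k*` is the largest `k ∈ {1,...,n}` with
`∑_{i=1}^k (δᵢ - δ_k) < y`. -/
theorem stmt2 (n : ℕ) (hn : 1 ≤ n) (y : ℝ) (hy : 0 < y) (δ : ℕ → ℝ)
    (hδ : ∀ i j, 1 ≤ i → i ≤ j → j ≤ n → δ j ≤ δ i)
    (kstar : ℕ)
    (hk : (kstar ∈ Finset.Icc 1 n ∧ ∑ i ∈ Finset.Icc 1 kstar, (δ i - δ kstar) < y) ∧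
      ∀ j, (j ∈ Finset.Icc 1 n ∧ ∑ i ∈ Finset.Icc 1 j, (δ i - δ j) < y) → j ≤ kstar)
    (lstar : ℝ) (hl : lstar = ((∑ i ∈ Finset.Icc 1 kstar, δ i) - y) / kstar) :
    ∑ i ∈ Finset.Icc 1 n, max (δ i - lstar) 0 = y :=
  stmt2_general n y δ hδ kstar hk lstar hl
end

section
/- For the optimal vector yᵢ* = max(δᵢ - λ*, 0), we have yᵢ* > 0 for i ≤ k* and yᵢ* = 0 for i > k*, where k* is the largest k with Σ_{i=1}^k (δᵢ - δ_k) < y and λ* = (Σ_{i=1}^{k*} δᵢ - y)/k*. -/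
/-!
Since `Σ_{i ≤ k*} (δᵢ - δ_{k*}) < y`, the threshold `λ*` lies strictly below `δ_{k*}`, so every
`δᵢ` with `i ≤ k*` exceeds it. Maximality of `k*` gives `y ≤ Σ_{i ≤ k*+1} (δᵢ - δ_{k*+1})`, whose
last term vanishes; this says `δ_{k*+1} ≤ λ*`, so every `δᵢ` with `i > k*` is at most `λ*`.
-/

open Finset

section Threshold

variable (δ : ℕ → ℝ)

theorem sum_Icc_sub_const (k : ℕ) (c : ℝ) :
    ∑ i ∈ Icc 1 k, (δ i - c) = ∑ i ∈ Icc 1 k, δ i - k * c := by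
  rw [sum_sub_distrib, sum_const, Nat.card_Icc, nsmul_eq_mul, Nat.add_sub_cancel]

theorem sum_Icc_succ_sub_self (k : ℕ) :
    ∑ i ∈ Icc 1 (k + 1), (δ i - δ (k + 1)) = ∑ i ∈ Icc 1 k, (δ i - δ (k + 1)) := by
  rw [sum_Icc_succ_top (by omega), sub_self, add_zero]

variable {δ} {k : ℕ} {y : ℝ}

theorem div_lt_of_sum_sub_lt (hk : 0 < k) (h : ∑ i ∈ Icc 1 k, (δ i - δ k) < y) :
    (∑ i ∈ Icc 1 k, δ i - y) / k < δ k := by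
  rw [sum_Icc_sub_const] at h
  rw [div_lt_iff₀ (by exact_mod_cast hk)]
  linarith

theorem le_div_of_le_sum_sub {c : ℝ} (hk : 0 < k) (h : y ≤ ∑ i ∈ Icc 1 k, (δ i - c)) :
    c ≤ (∑ i ∈ Icc 1 k, δ i - y) / k := by
  rw [sum_Icc_sub_const] at h
  rw [le_div_iff₀ (by exact_mod_cast hk)]
  linarith

end Threshold

theorem stmt4_general (n : ℕ) (y : ℝ) (δ : ℕ → ℝ)
    (hδ : ∀ i j, 1 ≤ i → i ≤ j → j ≤ n → δ j ≤ δ i)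
    (kstar : ℕ)
    (hk : (kstar ∈ Finset.Icc 1 n ∧ ∑ i ∈ Finset.Icc 1 kstar, (δ i - δ kstar) < y) ∧
      ∀ j, (j ∈ Finset.Icc 1 n ∧ ∑ i ∈ Finset.Icc 1 j, (δ i - δ j) < y) → j ≤ kstar)
    (lstar : ℝ) (hl : lstar = ((∑ i ∈ Finset.Icc 1 kstar, δ i) - y) / kstar) :
    (∀ i, 1 ≤ i → i ≤ kstar → 0 < max (δ i - lstar) 0) ∧
    (∀ i, kstar < i → i ≤ n → max (δ i - lstar) 0 = 0) := by
  obtain ⟨⟨hmem, hsum⟩, hmax⟩ := hk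
  obtain ⟨hk1, hkn⟩ := mem_Icc.mp hmem
  have hlt : lstar < δ kstar := hl ▸ div_lt_of_sum_sub_lt hk1 hsum
  refine ⟨fun i hi hik => ?_, fun i hki hin => ?_⟩
  · exact lt_max_of_lt_left (by linarith [hδ i kstar hi hik hkn])
  · have hge : y ≤ ∑ j ∈ Icc 1 kstar, (δ j - δ (kstar + 1)) := by
      rw [← sum_Icc_succ_sub_self]
      by_contra! h
      have := hmax (kstar + 1) ⟨mem_Icc.mpr ⟨by omega, by omega⟩, h⟩
      omega
    have hle : δ (kstar + 1) ≤ lstar := hl ▸ le_div_of_le_sum_sub hk1 hge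
    exact max_eq_right (by linarith [hδ (kstar + 1) i (by omega) hki hin])

/-- For `yᵢ* = max(δᵢ - λ*, 0)` we have `yᵢ* > 0` for `1 ≤ i ≤ k*` and
`yᵢ* = 0` for `k* < i ≤ n`. -/
theorem stmt4 (n : ℕ) (hn : 1 ≤ n) (y : ℝ) (hy : 0 < y) (δ : ℕ → ℝ)
    (hδ : ∀ i j, 1 ≤ i → i ≤ j → j ≤ n → δ j ≤ δ i)
    (kstar : ℕ)
    (hk : (kstar ∈ Finset.Icc 1 n ∧ ∑ i ∈ Finset.Icc 1 kstar, (δ i - δ kstar) < y) ∧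
      ∀ j, (j ∈ Finset.Icc 1 n ∧ ∑ i ∈ Finset.Icc 1 j, (δ i - δ j) < y) → j ≤ kstar)
    (lstar : ℝ) (hl : lstar = ((∑ i ∈ Finset.Icc 1 kstar, δ i) - y) / kstar) :
    (∀ i, 1 ≤ i → i ≤ kstar → 0 < max (δ i - lstar) 0) ∧
    (∀ i, kstar < i → i ≤ n → max (δ i - lstar) 0 = 0) :=
  stmt4_general n y δ hδ kstar hk lstar hl
end

section
/- If 0 < y ≤ Σ_{i=1}^n max(δᵢ, 0), then a nonnegative vector y* summing to y minimizes Σ_{i=1}^n |yᵢ* - δᵢ| if and only if there exist α₁,...,αₙ ∈ [0,1] with Σ_{i=1}^n αᵢ·max(δᵢ,0) = y and yᵢ* = αᵢ·max(δᵢ, 0) for all i. -/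
/-!
For `z ≥ 0` the triangle inequality gives `|z - d| ≥ |d| - z`, with equality exactly when
`z ≤ max d 0`. Summing, every feasible `z` costs at least `∑ |δᵢ| - y`, and this bound is attained
precisely by the feasible `z` with `zᵢ ≤ max δᵢ 0` for all `i`; such vectors exist because
`y ≤ ∑ max δᵢ 0` (rescale `max δᵢ 0`). So the minimizers are the feasible vectors lying below
`max δ 0` coordinatewise, which are the vectors `αᵢ · max δᵢ 0` with `αᵢ ∈ [0, 1]`.
-/

open Finset

lemma abs_sub_le_abs_sub_of_nonneg {d z : ℝ} (hz : 0 ≤ z) : |d| - z ≤ |z - d| := by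
  have := abs_sub_abs_le_abs_sub d z
  rw [abs_of_nonneg hz, abs_sub_comm] at this
  exact this

lemma abs_sub_eq_abs_sub_iff_le_max {d z : ℝ} (hz : 0 ≤ z) :
    |z - d| = |d| - z ↔ z ≤ max d 0 := by
  rcases le_total 0 d with hd | hd
  · rw [abs_of_nonneg hd, max_eq_left hd]
    constructor
    · intro h
      linarith [le_abs_self (z - d)]
    · intro h
      rw [abs_of_nonpos (by linarith)]
      ring
  · rw [abs_of_nonpos hd, max_eq_right hd, abs_of_nonneg (by linarith)]
    constructor <;> intro h <;> linarith

lemma le_of_le_one_mul {a t x : ℝ} (ha : 0 ≤ a) (ht : t ≤ 1) (hx : x = t * a) : x ≤ a :=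
  hx ▸ mul_le_of_le_one_left ha ht

section Finset

variable {ι : Type*} {s : Finset ι} {δ z : ι → ℝ}

lemma sum_abs_sub_sub_le_sum_abs_sub (hz : ∀ i ∈ s, 0 ≤ z i) :
    ∑ i ∈ s, |δ i| - ∑ i ∈ s, z i ≤ ∑ i ∈ s, |z i - δ i| := by
  rw [← sum_sub_distrib]
  exact sum_le_sum fun i hi => abs_sub_le_abs_sub_of_nonneg (hz i hi)

lemma sum_abs_sub_eq_iff_forall_le_max (hz : ∀ i ∈ s, 0 ≤ z i) :
    ∑ i ∈ s, |z i - δ i| = ∑ i ∈ s, |δ i| - ∑ i ∈ s, z i ↔ ∀ i ∈ s, z i ≤ max (δ i) 0 := by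
  rw [← sum_sub_distrib, eq_comm,
    sum_eq_sum_iff_of_le fun i hi => abs_sub_le_abs_sub_of_nonneg (hz i hi)]
  exact forall₂_congr fun i hi => eq_comm.trans (abs_sub_eq_abs_sub_iff_le_max (hz i hi))

lemma exists_nonneg_le_max_sum_eq {y : ℝ} (hy : 0 ≤ y) (h : y ≤ ∑ i ∈ s, max (δ i) 0) :
    ∃ z : ι → ℝ, (∀ i ∈ s, 0 ≤ z i) ∧ (∀ i ∈ s, z i ≤ max (δ i) 0) ∧ ∑ i ∈ s, z i = y := by
  set S := ∑ i ∈ s, max (δ i) 0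
  have hq : y / S ≤ 1 := div_le_one_of_le₀ h (hy.trans h)
  refine ⟨fun i => y / S * max (δ i) 0, fun i _ => by positivity,
    fun i _ => le_of_le_one_mul (le_max_right _ _) hq rfl, ?_⟩
  rw [← mul_sum]
  -- if `S = 0` then also `y = 0`, so the junk value `y / 0 = 0` is harmless
  exact div_mul_cancel_of_imp fun hS => le_antisymm (hS ▸ h) hy

lemma isMinimizer_iff_forall_le_max {y : ℝ} (h : y ≤ ∑ i ∈ s, max (δ i) 0)
    (hpos : ∀ i ∈ s, 0 ≤ z i) (hsum : ∑ i ∈ s, z i = y) :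
    (∀ w : ι → ℝ, (∀ i ∈ s, 0 ≤ w i) → ∑ i ∈ s, w i = y →
        ∑ i ∈ s, |z i - δ i| ≤ ∑ i ∈ s, |w i - δ i|) ↔
      ∀ i ∈ s, z i ≤ max (δ i) 0 := by
  constructor
  · intro hmin
    obtain ⟨w, hw, hwle, hwsum⟩ := exists_nonneg_le_max_sum_eq (hsum ▸ sum_nonneg hpos) h
    have hw_eq := (sum_abs_sub_eq_iff_forall_le_max (δ := δ) hw).2 hwle
    rw [← sum_abs_sub_eq_iff_forall_le_max hpos]
    refine le_antisymm ?_ (sum_abs_sub_sub_le_sum_abs_sub hpos)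
    calc ∑ i ∈ s, |z i - δ i| ≤ ∑ i ∈ s, |w i - δ i| := hmin w hw hwsum
      _ = ∑ i ∈ s, |δ i| - ∑ i ∈ s, z i := by rw [hw_eq, hwsum, hsum]
  · intro hle w hw hwsum
    rw [(sum_abs_sub_eq_iff_forall_le_max hpos).2 hle, hsum, ← hwsum]
    exact sum_abs_sub_sub_le_sum_abs_sub hw

lemma forall_le_iff_exists_mem_Icc_mul {a : ι → ℝ} (ha : ∀ i ∈ s, 0 ≤ a i)
    (hz : ∀ i ∈ s, 0 ≤ z i) :
    (∀ i ∈ s, z i ≤ a i) ↔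
      ∃ α : ι → ℝ, (∀ i ∈ s, α i ∈ Set.Icc (0 : ℝ) 1) ∧ ∀ i ∈ s, z i = α i * a i := by
  constructor
  · intro hle
    refine ⟨fun i => z i / a i, fun i hi => ⟨div_nonneg (hz i hi) (ha i hi),
      div_le_one_of_le₀ (hle i hi) (ha i hi)⟩, fun i hi => ?_⟩
    exact (div_mul_cancel_of_imp fun h0 => le_antisymm (h0 ▸ hle i hi) (hz i hi)).symm
  · rintro ⟨α, hα, hz_eq⟩ i hi
    exact le_of_le_one_mul (ha i hi) (hα i hi).2 (hz_eq i hi)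

end Finset

theorem stmt9_general (n : ℕ) (y : ℝ) (δ : ℕ → ℝ)
    (h : y ≤ ∑ i ∈ Finset.Icc 1 n, max (δ i) 0)
    (ystar : ℕ → ℝ) (hpos : ∀ i ∈ Finset.Icc 1 n, 0 ≤ ystar i)
    (hsum : ∑ i ∈ Finset.Icc 1 n, ystar i = y) :
    (∀ z : ℕ → ℝ, (∀ i ∈ Finset.Icc 1 n, 0 ≤ z i) → ∑ i ∈ Finset.Icc 1 n, z i = y →
        ∑ i ∈ Finset.Icc 1 n, |ystar i - δ i| ≤ ∑ i ∈ Finset.Icc 1 n, |z i - δ i|) ↔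
    ∃ α : ℕ → ℝ, (∀ i ∈ Finset.Icc 1 n, α i ∈ Set.Icc (0 : ℝ) 1) ∧
      ∑ i ∈ Finset.Icc 1 n, α i * max (δ i) 0 = y ∧
      ∀ i ∈ Finset.Icc 1 n, ystar i = α i * max (δ i) 0 := by
  rw [isMinimizer_iff_forall_le_max h hpos hsum,
    forall_le_iff_exists_mem_Icc_mul (fun i _ => le_max_right _ _) hpos]
  constructor
  · rintro ⟨α, hα, hystar⟩
    exact ⟨α, hα, hsum ▸ (sum_congr rfl hystar).symm, hystar⟩
  · rintro ⟨α, hα, -, hystar⟩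
    exact ⟨α, hα, hystar⟩

/-- If `0 < y ≤ ∑ max(δᵢ,0)`, then a nonnegative vector `y*` summing to `y`
minimizes `∑ |yᵢ* - δᵢ|` iff `yᵢ* = αᵢ·max(δᵢ,0)` for some `αᵢ ∈ [0,1]` with
`∑ αᵢ·max(δᵢ,0) = y`. -/
theorem stmt9 (n : ℕ) (y : ℝ) (hy : 0 < y) (δ : ℕ → ℝ)
    (h : y ≤ ∑ i ∈ Finset.Icc 1 n, max (δ i) 0)
    (ystar : ℕ → ℝ) (hpos : ∀ i ∈ Finset.Icc 1 n, 0 ≤ ystar i)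
    (hsum : ∑ i ∈ Finset.Icc 1 n, ystar i = y) :
    (∀ z : ℕ → ℝ, (∀ i ∈ Finset.Icc 1 n, 0 ≤ z i) → ∑ i ∈ Finset.Icc 1 n, z i = y →
        ∑ i ∈ Finset.Icc 1 n, |ystar i - δ i| ≤ ∑ i ∈ Finset.Icc 1 n, |z i - δ i|) ↔
    ∃ α : ℕ → ℝ, (∀ i ∈ Finset.Icc 1 n, α i ∈ Set.Icc (0 : ℝ) 1) ∧
      ∑ i ∈ Finset.Icc 1 n, α i * max (δ i) 0 = y ∧
      ∀ i ∈ Finset.Icc 1 n, ystar i = α i * max (δ i) 0 :=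
  stmt9_general n y δ h ystar hpos hsum
end
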